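/- The unique solution θ ∈ (0, π) of the equation 2π/3 − arccos((3φ−1)/4) = 2·arctan( √(cos²(γ/2) − cos²(θ/2)) / cos(θ/2) ), where γ = arccos(1/3) and φ = (1+√5)/2, is θ = 2π/3. -/

import Mathlib

/-!
Since `cos (2 arctan √(5/3)) = -1/4` and `sin (2 arctan √(5/3)) = √15/4`, the addition formula gives
`cos (2π/3 - 2 arctan √(5/3)) = (1 + 3√5)/8 = (3φ - 1)/4`; as `√(5/3) < √3` the angle lies in
`[0, π]`, so the left-hand side equals `2 arctan √(5/3)`. As `cos² (γ/2) = 2/3`, the equation becomes `√(2/3 - c²)/c = √(5/3)` for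
`c = cos (θ/2) > 0`, i.e. `c² = 1/4`, i.e. `θ/2 = π/3`.
-/

open Real

namespace Real

theorem cos_two_mul_arctan (x : ℝ) : cos (2 * arctan x) = (1 - x ^ 2) / (1 + x ^ 2) := by
  have h : √(1 + x ^ 2) ^ 2 = 1 + x ^ 2 := sq_sqrt (by positivity)
  rw [cos_two_mul, cos_arctan, div_pow, h]
  field_simp
  ring

theorem sin_two_mul_arctan (x : ℝ) : sin (2 * arctan x) = 2 * x / (1 + x ^ 2) := by
  have h : √(1 + x ^ 2) * √(1 + x ^ 2) = 1 + x ^ 2 := mul_self_sqrt (by positivity)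
  rw [sin_two_mul, sin_arctan, cos_arctan, mul_assoc, div_mul_div_comm, mul_one, h, mul_div_assoc]

theorem cos_sq_half_arccos {x : ℝ} (h₁ : -1 ≤ x) (h₂ : x ≤ 1) :
    cos (arccos x / 2) ^ 2 = (1 + x) / 2 := by
  rw [cos_sq, mul_div_cancel₀ _ two_ne_zero, cos_arccos h₁ h₂]
  ring

theorem sqrt_sub_sq_div_eq_iff {a c t : ℝ} (hc : 0 < c) (ht : 0 < t) :
    √(a - c ^ 2) / c = t ↔ (1 + t ^ 2) * c ^ 2 = a := by
  rw [div_eq_iff hc.ne', sqrt_eq_iff_mul_self_eq_of_pos (mul_pos ht hc)]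
  constructor <;> intro h <;> linear_combination h

theorem cos_half_eq_one_half_iff {θ : ℝ} (h₀ : 0 ≤ θ) (h₁ : θ ≤ 2 * π) :
    cos (θ / 2) = 1 / 2 ↔ θ = 2 * π / 3 := by
  rw [← cos_pi_div_three, injOn_cos.eq_iff ⟨by linarith, by linarith⟩
    ⟨by linarith [pi_pos], by linarith [pi_pos]⟩]
  constructor <;> intro h <;> linarith

theorem two_pi_div_three_sub_arccos :
    2 * π / 3 - arccos ((1 + 3 * √5) / 8) = 2 * arctan √(5 / 3) := by
  set α := 2 * arctan √(5 / 3)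
  have hα₀ : 0 < α := mul_pos two_pos (arctan_pos.mpr (by positivity))
  have hα : α < 2 * π / 3 := by
    have := arctan_strictMono (sqrt_lt_sqrt (by norm_num) (show (5 / 3 : ℝ) < 3 by norm_num))
    rw [arctan_sqrt_three] at this
    linarith
  have h53 : √(5 / 3) ^ 2 = 5 / 3 := sq_sqrt (by norm_num)
  have hcos : cos α = -1 / 4 := by rw [cos_two_mul_arctan, h53]; norm_num
  have hsin : sin α = 3 / 4 * √(5 / 3) := by rw [sin_two_mul_arctan, h53]; ring
  have h35 : √3 * √(5 / 3) = √5 := by rw [← sqrt_mul (by norm_num)]; norm_num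
  have hcos' : cos (2 * π / 3 - α) = (1 + 3 * √5) / 8 := by
    rw [show 2 * π / 3 - α = π - (π / 3 + α) by ring, cos_pi_sub, cos_add, cos_pi_div_three,
      sin_pi_div_three, hcos, hsin]
    linear_combination (3 / 8) * h35
  rw [← hcos', arccos_cos (by linarith) (by linarith)]
  ring

end Real

theorem stmt11 (γ φ : ℝ) (hγ : γ = Real.arccos (1 / 3))
    (hφ : φ = (1 + Real.sqrt 5) / 2) :
    ∀ θ ∈ Set.Ioo (0 : ℝ) Real.pi,
      (2 * Real.pi / 3 - Real.arccos ((3 * φ - 1) / 4)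
          = 2 * Real.arctan (Real.sqrt (Real.cos (γ / 2) ^ 2 - Real.cos (θ / 2) ^ 2)
              / Real.cos (θ / 2)))
        ↔ θ = 2 * Real.pi / 3 := by
  subst hγ hφ
  rintro θ ⟨hθ₀, hθπ⟩
  have hc : 0 < cos (θ / 2) := cos_pos_of_mem_Ioo ⟨by linarith [pi_pos], by linarith⟩
  rw [show (3 * ((1 + √5) / 2) - 1) / 4 = (1 + 3 * √5) / 8 by ring, two_pi_div_three_sub_arccos,
    cos_sq_half_arccos (by norm_num) (by norm_num), mul_right_inj' two_ne_zero,
    arctan_injective.eq_iff, eq_comm, sqrt_sub_sq_div_eq_iff hc (by positivity),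
    sq_sqrt (by norm_num), ← cos_half_eq_one_half_iff hθ₀.le (by linarith),
    ← pow_left_inj₀ hc.le (by norm_num) two_ne_zero]
  constructor <;> intro h <;> linarith
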